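/- With Λ_u(x;y) as above, the kernel is annihilated by A_N(u): A_N(u) Λ_u(x_1,…,x_N; y_1,…,y_{N−1}) = 0. -/

import Mathlib

noncomputable section

open Complex

/-- Complex-valued functions of countably many real coordinates `x 1, x 2, …`. -/
abbrev TodaFun := (ℕ → ℝ) → ℂ

/-- The momentum operator of the `n`-th particle, `p_n = −iħ ∂/∂x_n`. -/
def pOp (hbar : ℝ) (n : ℕ) (f : TodaFun) : TodaFun :=
  fun x => (-Complex.I * hbar) * deriv (fun t : ℝ => f (Function.update x n t)) (x n)

/-- The Lax matrix `L_n(u) = [[u − p_n, e^{−x_n}], [−e^{x_n}, 0]]`,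
as a 2×2 matrix of operators on functions. -/
def Lax (hbar : ℝ) (u : ℂ) (n : ℕ) : Fin 2 → Fin 2 → (TodaFun → TodaFun) :=
  ![![fun f x => u * f x - pOp hbar n f x, fun f x => (Real.exp (-(x n)) : ℂ) * f x],
    ![fun f x => (-Real.exp (x n) : ℝ) * f x, fun _ _ => 0]]

/-- Product of 2×2 matrices of operators: `(AB)_{ij} f = A_{i0}(B_{0j} f) + A_{i1}(B_{1j} f)`. -/
def mulOp (A B : Fin 2 → Fin 2 → (TodaFun → TodaFun)) : Fin 2 → Fin 2 → (TodaFun → TodaFun) :=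
  fun i j f x => A i 0 (B 0 j f) x + A i 1 (B 1 j f) x

/-- The monodromy matrix `T_N(u) = L_N(u) ⋯ L_1(u)`, with `T_0 = Id`. -/
def Tmat (hbar : ℝ) (u : ℂ) : ℕ → (Fin 2 → Fin 2 → (TodaFun → TodaFun))
  | 0 => ![![fun f => f, fun _ _ => 0], ![fun _ _ => 0, fun f => f]]
  | (n + 1) => mulOp (Lax hbar u (n + 1)) (Tmat hbar u n)

/-- `A_N(u)`: the (1,1) entry of the monodromy matrix. -/
def Aop (hbar : ℝ) (u : ℂ) (N : ℕ) : TodaFun → TodaFun := Tmat hbar u N 0 0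

/-- `B_N(u)`: the (1,2) entry of the monodromy matrix. -/
def Bop (hbar : ℝ) (u : ℂ) (N : ℕ) : TodaFun → TodaFun := Tmat hbar u N 0 1

/-- `C_N(u)`: the (2,1) entry of the monodromy matrix. -/
def Cop (hbar : ℝ) (u : ℂ) (N : ℕ) : TodaFun → TodaFun := Tmat hbar u N 1 0

/-- `D_N(u)`: the (2,2) entry of the monodromy matrix. -/
def Dop (hbar : ℝ) (u : ℂ) (N : ℕ) : TodaFun → TodaFun := Tmat hbar u N 1 1

/-- The kernel
`Λ_u(x;y) = exp{(i/ħ)u(Σ_{n=1}^N x_n − Σ_{n=1}^{N−1} y_n)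
  − (1/ħ)Σ_{n=1}^{N−1}(e^{y_n−x_{n+1}} + e^{x_n−y_n})}`. -/
def LamKer (hbar : ℝ) (N : ℕ) (u : ℂ) (y : ℕ → ℝ) : TodaFun :=
  fun x => Complex.exp (Complex.I * u / hbar
    * (((∑ n ∈ Finset.Icc 1 N, x n) - ∑ n ∈ Finset.Icc 1 (N - 1), y n : ℝ) : ℂ)
    - ((1 / hbar) * ∑ n ∈ Finset.Icc 1 (N - 1),
        (Real.exp (y n - x (n + 1)) + Real.exp (x n - y n)) : ℝ))

/-! `Λ` is a plane wave `e^{(i/ħ)u Σ(x − y)}` times `e^{−V/ħ}`, so on `aΛ` with `a` constant in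
`x_n` the operator `u − p_n` acts as multiplication by `−i ∂V/∂x_n`. In the recurrence
`A_{m+2} = (u − p_{m+2}) A_{m+1} − e^{x_{m+1} − x_{m+2}} A_m`, the summand `−e^{y_{m+1} − x_{m+2}}`
of `∂V/∂x_{m+2}` cancels the second term, and induction gives
`A_m Λ = (−i)^m e^{Σ_{j ≤ m} (x_j − y_j)} Λ` for `m < N`. At `m = N` the summand `e^{x_N − y_N}` is
missing from `V`, so nothing survives: `A_N Λ = 0`. -/

/-- `∂V/∂x_n` for the potential `V(x) = Σ_{j=1}^{N−1} (e^{y_j − x_{j+1}} + e^{x_j − y_j})` of `LamKer`,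
valid for `1 ≤ n ≤ N`. -/
def potentialDeriv (N : ℕ) (y x : ℕ → ℝ) (n : ℕ) : ℝ :=
  (if 2 ≤ n then -Real.exp (y (n - 1) - x n) else 0) + (if n < N then Real.exp (x n - y n) else 0)

lemma hasDerivAt_comp_update_apply {g : ℝ → ℝ} {g' : ℝ} (x : ℕ → ℝ) (n k : ℕ)
    (hg : HasDerivAt g g' (x k)) :
    HasDerivAt (fun s => g (Function.update x n s k)) (if k = n then g' else 0) (x n) := by
  by_cases hk : k = n
  · subst hk
    simpa using hg
  · simpa [Function.update_of_ne hk, hk] using hasDerivAt_const (x n) (g (x k))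

lemma hasDerivAt_sum_update_of_mem {S : Finset ℕ} {n : ℕ} (hn : n ∈ S) (x : ℕ → ℝ) (t : ℝ) :
    HasDerivAt (fun s => ∑ j ∈ S, Function.update x n s j) 1 t := by
  simp only [Finset.sum_update_of_mem hn]
  exact (hasDerivAt_id t).add_const _

lemma hasDerivAt_potential_update {N n : ℕ} (h1 : 1 ≤ n) (h2 : n ≤ N) (y x : ℕ → ℝ) :
    HasDerivAt (fun s => ∑ j ∈ Finset.Icc 1 (N - 1),
        (Real.exp (y j - Function.update x n s (j + 1)) + Real.exp (Function.update x n s j - y j)))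
      (potentialDeriv N y x n) (x n) := by
  refine (HasDerivAt.fun_sum fun j _ =>
    (hasDerivAt_comp_update_apply x n (j + 1) ((hasDerivAt_id' _).const_sub (y j)).exp).fun_add
      (hasDerivAt_comp_update_apply x n j ((hasDerivAt_id' _).sub_const (y j)).exp)).congr_deriv ?_
  have hshift : ∀ j, j + 1 = n ↔ j = n - 1 := fun j => by omega
  have hmem₁ : n - 1 ∈ Finset.Icc 1 (N - 1) ↔ 2 ≤ n := by simp only [Finset.mem_Icc]; omega
  have hmem₂ : n ∈ Finset.Icc 1 (N - 1) ↔ n < N := by simp only [Finset.mem_Icc]; omega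
  simp only [Finset.sum_add_distrib, hshift, Finset.sum_ite_eq', hmem₁, hmem₂,
    Nat.sub_add_cancel h1, potentialDeriv, mul_neg_one, mul_one]

lemma hasDerivAt_LamKer_update (hbar : ℝ) (u : ℂ) {N n : ℕ} (h1 : 1 ≤ n) (h2 : n ≤ N)
    (y x : ℕ → ℝ) :
    HasDerivAt (fun s => LamKer hbar N u y (Function.update x n s))
      ((Complex.I * u / hbar - ((1 / hbar * potentialDeriv N y x n : ℝ) : ℂ)) * LamKer hbar N u y x)
      (x n) := by
  have hsum := ((hasDerivAt_sum_update_of_mem (Finset.mem_Icc.2 ⟨h1, h2⟩) x (x n)).sub_const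
    (∑ j ∈ Finset.Icc 1 (N - 1), y j)).ofReal_comp.const_mul (Complex.I * u / hbar)
  have hpot := ((hasDerivAt_potential_update h1 h2 y x).const_mul (1 / hbar)).ofReal_comp
  simpa [LamKer, mul_comm] using (hsum.sub hpot).cexp

lemma sub_pOp_of_eq_mul_LamKer {hbar : ℝ} (hh : hbar ≠ 0) (u : ℂ) {N n : ℕ} (h1 : 1 ≤ n)
    (h2 : n ≤ N) (y x : ℕ → ℝ) (a : ℂ) {f : TodaFun}
    (hf : ∀ t, f (Function.update x n t) = a * LamKer hbar N u y (Function.update x n t)) :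
    u * f x - pOp hbar n f x = -Complex.I * a * potentialDeriv N y x n * LamKer hbar N u y x := by
  have hline : (fun t => f (Function.update x n t))
      = fun t => a * LamKer hbar N u y (Function.update x n t) := funext hf
  have hfx : f x = a * LamKer hbar N u y x := by simpa using hf (x n)
  rw [pOp, hline, ((hasDerivAt_LamKer_update hbar u h1 h2 y x).const_mul a).deriv, hfx]
  have hh' : (hbar : ℂ) ≠ 0 := by exact_mod_cast hh
  push_cast
  field_simp
  ring_nf
  rw [Complex.I_sq]
  ring

lemma Aop_zero (hbar : ℝ) (u : ℂ) (f : TodaFun) : Aop hbar u 0 f = f := rfl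

lemma Aop_one (hbar : ℝ) (u : ℂ) (f : TodaFun) (x : ℕ → ℝ) :
    Aop hbar u 1 f x = u * f x - pOp hbar 1 f x := by
  simp [Aop, Tmat, mulOp, Lax]

lemma Aop_add_two (hbar : ℝ) (u : ℂ) (m : ℕ) (f : TodaFun) (x : ℕ → ℝ) :
    Aop hbar u (m + 2) f x = u * Aop hbar u (m + 1) f x - pOp hbar (m + 2) (Aop hbar u (m + 1) f) x
      - Real.exp (x (m + 1) - x (m + 2)) * Aop hbar u m f x := by
  have hC : Tmat hbar u (m + 1) 1 0 f x = -Real.exp (x (m + 1)) * Aop hbar u m f x := by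
    simp [Tmat, mulOp, Lax, Aop]
  show mulOp (Lax hbar u (m + 2)) (Tmat hbar u (m + 1)) 0 0 f x = _
  simp only [mulOp, Lax, Matrix.cons_val_zero, Matrix.cons_val_one, hC, Aop]
  rw [Real.exp_sub, Real.exp_neg]
  push_cast
  ring

lemma Aop_LamKer {hbar : ℝ} (hh : hbar ≠ 0) (u : ℂ) {N : ℕ} (hN : 0 < N) (y : ℕ → ℝ) (m : ℕ)
    (hm : m ≤ N) (x : ℕ → ℝ) :
    Aop hbar u m (LamKer hbar N u y) x = if m < N then
      (-Complex.I) ^ m * Real.exp (∑ j ∈ Finset.Icc 1 m, (x j - y j)) * LamKer hbar N u y x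
      else 0 := by
  induction m using Nat.twoStepInduction generalizing x with
  | zero => simp [Aop_zero, hN]
  | one =>
    rw [Aop_one, sub_pOp_of_eq_mul_LamKer hh u le_rfl hm y x 1 (fun t => (one_mul _).symm)]
    split_ifs with hN₁ <;> simp [potentialDeriv, hN₁]
  | more k ih₀ ih₁ =>
    have hE_update : ∀ t, ∑ j ∈ Finset.Icc 1 (k + 1), (Function.update x (k + 2) t j - y j)
        = ∑ j ∈ Finset.Icc 1 (k + 1), (x j - y j) :=
      fun t => Finset.sum_congr rfl fun j hj => by
        rw [Function.update_of_ne (by simp only [Finset.mem_Icc] at hj; omega)]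
    have hline := fun t => (ih₁ (by omega) (Function.update x (k + 2) t)).trans
      (by rw [if_pos (by omega), hE_update])
    rw [Aop_add_two, sub_pOp_of_eq_mul_LamKer hh u (by omega) hm y x _ hline,
      ih₀ (by omega), if_pos (by omega)]
    have hE₁ := Finset.sum_Icc_succ_top (by omega : 1 ≤ k + 1) fun j => x j - y j
    have hE₂ := Finset.sum_Icc_succ_top (by omega : 1 ≤ k + 2) fun j => x j - y j
    have hchain : Real.exp (x (k + 1) - x (k + 2))
        = Real.exp (x (k + 1) - y (k + 1)) * Real.exp (y (k + 1) - x (k + 2)) := by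
      rw [← Real.exp_add]; ring_nf
    simp only [potentialDeriv, if_pos (by omega : 2 ≤ k + 2), (by omega : k + 2 - 1 = k + 1),
      hE₂, hE₁, Real.exp_add, hchain]
    set E := Real.exp (∑ j ∈ Finset.Icc 1 k, (x j - y j))
    set e₁ := Real.exp (x (k + 1) - y (k + 1))
    set e₂ := Real.exp (y (k + 1) - x (k + 2))
    split_ifs <;> push_cast <;>
      linear_combination (-(-Complex.I) ^ k * E * e₁ * e₂ * LamKer hbar N u y x) * Complex.I_sq

theorem Aop_annihilates_LamKer (hbar : ℝ) (hh : 0 < hbar) (u : ℂ) (N : ℕ) (hN : 1 ≤ N)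
    (y : ℕ → ℝ) :
    ∀ x : ℕ → ℝ, Aop hbar u N (LamKer hbar N u y) x = 0 := by
  intro x
  simpa using Aop_LamKer hh.ne' u hN y N le_rfl x

end
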